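/- arXiv:1002.2955 — 7 statements merged into one kernel-verified Lean document; each statement's English description precedes it below -/
import Mathlib

section
/- If (v,b,r,k,λ) ∈ ℝ⁵ satisfies the design equations vr = bk, r(k-1) = λ(v-1), and Q = r² - λb = 0, then (v,b,r,k,λ) lies in one of the four planes: {b=r=λ=0}, {b=r=0, v=1}, {r=λ=k=0}, {b=r=λ, v=k}. -/
theorem q_zero_planes (v b r k l : ℝ) (h1 : v * r = b * k) (h2 : r * (k - 1) = l * (v - 1))
    (hQ : r ^ 2 - l * b = 0) :
    (b = 0 ∧ r = 0 ∧ l = 0) ∨ (b = 0 ∧ r = 0 ∧ v = 1) ∨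
    (r = 0 ∧ l = 0 ∧ k = 0) ∨ (b = r ∧ r = l ∧ v = k) := by
  rcases eq_or_ne r 0 with hr | hr
  · subst hr
    have hlb : l * b = 0 := by nlinarith
    have hbk : b * k = 0 := by nlinarith
    rcases mul_eq_zero.1 hlb with hl | hb
    · rcases mul_eq_zero.1 hbk with hb | hk
      · exact Or.inl ⟨hb, rfl, hl⟩
      · exact Or.inr (Or.inr (Or.inl ⟨rfl, hl, hk⟩))
    · have hv : l * (v - 1) = 0 := by nlinarith
      rcases mul_eq_zero.1 hv with hl | hv'
      · exact Or.inl ⟨hb, rfl, hl⟩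
      · exact Or.inr (Or.inl ⟨hb, rfl, by linarith⟩)
  · have hl : l ≠ 0 := by
      intro h
      apply hr
      have : r ^ 2 = 0 := by rw [h] at hQ; linarith
      exact pow_eq_zero_iff (n := 2) (by norm_num) |>.1 this
    have key : l * (b - r) = 0 := by linear_combination (k - 1) * hQ - r * h2 - l * h1
    have hbr : b = r := by
      rcases mul_eq_zero.1 key with h | h
      · exact absurd h hl
      · linarith
    have hrl : r = l := by
      have : r * (r - l) = 0 := by nlinarith
      rcases mul_eq_zero.1 this with h | h
      · exact absurd h hr
      · linarith
    have hvk : v = k := by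
      have : r * (v - k) = 0 := by linear_combination h1 + k * hbr
      rcases mul_eq_zero.1 this with h | h
      · exact absurd h hr
      · linarith
    exact Or.inr (Or.inr (Or.inr ⟨hbr, hrl, hvk⟩))
end

section
/- For all nonzero reals f, p with f ≠ p and all Q ∈ ℝ, setting d = f-p, the point (Q/(pd)+1, fQ/(pd), Q/d, Q/(fd)+p/f, pQ/(fd)-pd/f) lies in D; that is, the P-line P(f,p) parametrized by Q is contained in D. -/
/-! With `d = f - p`, both sides of `v r = b k` equal `Q (Q + p d) / (p d²)`, and both sides of
`r (k - 1) = λ (v - 1)` equal `Q (Q - d²) / (f d²)`; the latter uses `p - f = -d`. -/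

section PLine

variable {K : Type*} [Field K] {f p : K}

theorem pLine_replication_identity (d Q : K) (hf : f ≠ 0) (hp : p ≠ 0) :
    (Q / (p * d) + 1) * (Q / d) = f * Q / (p * d) * (Q / (f * d) + p / f) := by
  field_simp

theorem pLine_pairwise_balance_identity (Q : K) (hf : f ≠ 0) (hp : p ≠ 0) :
    Q / (f - p) * (Q / (f * (f - p)) + p / f - 1)
      = (p * Q / (f * (f - p)) - p * (f - p) / f) * (Q / (p * (f - p)) + 1 - 1) := by
  rcases eq_or_ne (f - p) 0 with hd | hd
  · -- `x / 0 = 0` makes both sides vanish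
    simp [hd]
  field_simp
  ring

end PLine

theorem P_line_in_D_general (f p Q : ℝ) (hf : f ≠ 0) (hp : p ≠ 0) :
    let d := f - p
    let v := Q / (p * d) + 1
    let b := f * Q / (p * d)
    let r := Q / d
    let k := Q / (f * d) + p / f
    let l := p * Q / (f * d) - p * d / f
    v * r = b * k ∧ r * (k - 1) = l * (v - 1) :=
  ⟨pLine_replication_identity (f - p) Q hf hp, pLine_pairwise_balance_identity Q hf hp⟩

theorem P_line_in_D (f p Q : ℝ) (hf : f ≠ 0) (hp : p ≠ 0) (hfp : f ≠ p) :
    let d := f - p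
    let v := Q / (p * d) + 1
    let b := f * Q / (p * d)
    let r := Q / d
    let k := Q / (f * d) + p / f
    let l := p * Q / (f * d) - p * d / f
    v * r = b * k ∧ r * (k - 1) = l * (v - 1) :=
  P_line_in_D_general f p Q hf hp
end

section
/- For all nonzero reals f, p with f ≠ p and all Q ∈ ℝ, setting d = f-p, the point (Q/(pd)-d/p, fQ/(pd)-fd/p, Q/d, Q/(fd), pQ/(fd)) lies in D; that is, the F₀-line F₀(f,p) parametrized by Q is contained in D. -/
theorem F0_line_in_D (f p Q : ℝ) (hf : f ≠ 0) (hp : p ≠ 0) (hfp : f ≠ p) :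
    let d := f - p
    let v := Q / (p * d) - d / p
    let b := f * Q / (p * d) - f * d / p
    let r := Q / d
    let k := Q / (f * d)
    let l := p * Q / (f * d)
    v * r = b * k ∧ r * (k - 1) = l * (v - 1) := by
  have hd : f - p ≠ 0 := sub_ne_zero.mpr hfp
  constructor <;> field_simp <;> ring
end

section
/- For all nonzero reals f, p with f ≠ p and all Q ∈ ℝ, setting d = f-p, the point (Q/(pd)-p/d, fQ/(pd)-fp/d, Q/d - fp/d, Q/(fd)-p/d, pQ/(fd)-fp/d) lies in D; that is, the F₁-line F₁(f,p) parametrized by Q is contained in D. -/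
/-! On the F₁-line the parameters satisfy `b = f v`, `r = f k`, `r = p (v - 1)` and
`λ = p (k - 1)`; both defining identities of `D` follow from these four relations alone. -/

theorem mem_D_of_ratios {v b r k l f p : ℝ} (hb : b = f * v) (hrk : r = f * k)
    (hrv : r = p * (v - 1)) (hl : l = p * (k - 1)) :
    v * r = b * k ∧ r * (k - 1) = l * (v - 1) := by
  constructor
  · rw [hb, hrk]; ring
  · rw [hl, hrv]; ring

theorem F1_line_in_D (f p Q : ℝ) (hf : f ≠ 0) (hp : p ≠ 0) (hfp : f ≠ p) :
    let d := f - p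
    let v := Q / (p * d) - p / d
    let b := f * Q / (p * d) - f * p / d
    let r := Q / d - f * p / d
    let k := Q / (f * d) - p / d
    let l := p * Q / (f * d) - f * p / d
    v * r = b * k ∧ r * (k - 1) = l * (v - 1) := by
  intro d v b r k l
  have hd : d ≠ 0 := sub_ne_zero.mpr hfp
  apply mem_D_of_ratios (f := f) (p := p)
  · simp only [b, v]; ring
  · simp only [r, k]; field_simp
  · simp only [r, v, d]; field_simp; ring
  · simp only [l, k, d]; field_simp; ring
end

section
/- Complementation C maps the F₀-line F₀(f,p) onto the F₁-line F₁(f, f-p): applying C(v,b,r,k,λ) = (v,b,b-r,v-k,b-2r+λ) to the point of F₀(f,p) with parameter Q gives the point of F₁(f,f-p) with parameter Q. -/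
namespace BlockDesign

variable {K : Type*}

def complement [Ring K] (x : K × K × K × K × K) : K × K × K × K × K :=
  let (v, b, r, k, l) := x
  (v, b, b - r, v - k, b - 2 * r + l)

def lineF₀ [Field K] (f p Q : K) : K × K × K × K × K :=
  let d := f - p
  (Q / (p * d) - d / p, f * Q / (p * d) - f * d / p, Q / d, Q / (f * d), p * Q / (f * d))

def lineF₁ [Field K] (f p Q : K) : K × K × K × K × K :=
  let d := f - p
  (Q / (p * d) - p / d, f * Q / (p * d) - f * p / d, Q / d - f * p / d,
    Q / (f * d) - p / d, p * Q / (f * d) - f * p / d)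

/-- Passing from `p` to `f - p` swaps the roles of `p` and `d = f - p`; each coordinate is then
a rational identity whose denominators `p`, `d`, `f` are nonzero. -/
theorem complement_lineF₀ [Field K] {f p : K} (hf : f ≠ 0) (hp : p ≠ 0) (hfp : f ≠ p) (Q : K) :
    complement (lineF₀ f p Q) = lineF₁ f (f - p) Q := by
  have hd : f - p ≠ 0 := sub_ne_zero.mpr hfp
  simp only [complement, lineF₀, lineF₁, sub_sub_cancel, Prod.mk.injEq]
  refine ⟨?_, ?_, ?_, ?_, ?_⟩ <;> field_simp <;> ring

end BlockDesign

open BlockDesign in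
theorem C_maps_F0_to_F1 (f p Q : ℝ) (hf : f ≠ 0) (hp : p ≠ 0) (hfp : f ≠ p) :
    let d := f - p
    -- point of F₀(f,p) at parameter Q
    let v := Q / (p * d) - d / p
    let b := f * Q / (p * d) - f * d / p
    let r := Q / d
    let k := Q / (f * d)
    let l := p * Q / (f * d)
    -- F₁(f', p') with f' = f, p' = f - p, d' = f' - p' = p
    let f' := f
    let p' := f - p
    let d' := f' - p'
    (v, b, b - r, v - k, b - 2 * r + l) =
      (Q / (p' * d') - p' / d', f' * Q / (p' * d') - f' * p' / d',
       Q / d' - f' * p' / d', Q / (f' * d') - p' / d',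
       p' * Q / (f' * d') - f' * p' / d') :=
  complement_lineF₀ hf hp hfp Q
end

section
/- The map N takes the P-line P(f,p) to the F₀-line F₀(-p,-f): applying N(v,b,r,k,λ) = (1-k, λ, r, 1-v, b) to the point of P(f,p) with parameter Q gives the point of F₀(-p,-f) with parameter Q. -/
theorem N_maps_P_to_F0 (f p Q : ℝ) (hf : f ≠ 0) (hp : p ≠ 0) (hfp : f ≠ p) :
    let d := f - p
    -- point of P(f,p) at parameter Q
    let v := Q / (p * d) + 1
    let b := f * Q / (p * d)
    let r := Q / d
    let k := Q / (f * d) + p / f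
    let l := p * Q / (f * d) - p * d / f
    -- F₀(f', p') with f' = -p, p' = -f, d' = f' - p' = f - p = d
    let f' := -p
    let p' := -f
    let d' := f' - p'
    (1 - k, l, r, 1 - v, b) =
      (Q / (p' * d') - d' / p', f' * Q / (p' * d') - f' * d' / p',
       Q / d', Q / (f' * d'), p' * Q / (f' * d')) := by
  have hd : f - p ≠ 0 := sub_ne_zero.mpr hfp
  have hd2 : p - f ≠ 0 := sub_ne_zero.mpr (Ne.symm hfp)
  simp only []
  refine Prod.ext ?_ (Prod.ext ?_ (Prod.ext ?_ (Prod.ext ?_ ?_))) <;>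
    · rw [show (-p : ℝ) - -f = f - p from by ring]
      try field_simp
      try ring
end

section
/- If an affine transformation M(Δ) = ΔA + Γ of ℝ⁵ maps D into D, fixes the plane Π₀ = {b=r=λ=0} pointwise, and maps (0,1,0,0,0) to (0,x,0,0,0), (1,1,1,1,1) to (1,y,y,1,y), and (1,0,0,1,1) to (1,0,0,1,z), then x = y = z and M = M_x, i.e., M(v,b,r,k,λ) = (v, xb, xr, k, xλ). -/
/-!
Since `M` fixes `0 ∈ Π₀`, it is linear, so its matrix is read off row by row from the images of
`e₀, e₃ ∈ Π₀`, `e₁`, `(1,0,0,1,1)` and `(1,1,1,1,1)`; this leaves the three parameters `x, y, z`.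
The parameters of the 2-(3,2,1) design `(3,3,2,2,1) ∈ D` are mapped to `(3, x + 2y, 2y, 2, 2y - z)`,
and the two defining equations of `D` at this point read `x = y` and `y = z`.
-/

def inD (q : Fin 5 → ℝ) : Prop :=
  q 0 * q 2 = q 1 * q 3 ∧ q 2 * (q 3 - 1) = q 4 * (q 0 - 1)

open Matrix

def normalizedMatrix {R : Type*} [Ring R] (x y z : R) : Matrix (Fin 5) (Fin 5) R :=
  !![1, 0, 0, 0, 0; 0, x, 0, 0, 0; 0, y - x, y, 0, y - z; 0, 0, 0, 1, 0; 0, 0, 0, 0, z]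

theorem vecMul_normalizedMatrix {R : Type*} [CommRing R] (q : Fin 5 → R) (x y z : R) :
    q ᵥ* normalizedMatrix x y z =
      ![q 0, x * q 1 + (y - x) * q 2, y * q 2, q 3, (y - z) * q 2 + z * q 4] := by
  funext j
  fin_cases j <;> simp [normalizedMatrix, vecMul_eq_sum, Fin.sum_univ_five] <;> ring

theorem eq_normalizedMatrix_of_vecMul_eq {R : Type*} [CommRing R] (A : Matrix (Fin 5) (Fin 5) R)
    (x y z : R)
    (h₀ : ![1, 0, 0, 0, 0] ᵥ* A = ![1, 0, 0, 0, 0]) (h₃ : ![0, 0, 0, 1, 0] ᵥ* A = ![0, 0, 0, 1, 0])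
    (h₁ : ![0, 1, 0, 0, 0] ᵥ* A = ![0, x, 0, 0, 0]) (hz : ![1, 0, 0, 1, 1] ᵥ* A = ![1, 0, 0, 1, z])
    (hy : ![1, 1, 1, 1, 1] ᵥ* A = ![1, y, y, 1, y]) :
    A = normalizedMatrix x y z := by
  rw [vecMul_eq_sum, Fin.sum_univ_five] at h₀ h₃ h₁ hz hy
  simp only [cons_val, one_smul, zero_smul, add_zero, zero_add]
    at h₀ h₃ h₁ hz hy
  have h₄ : A 4 = ![1, 0, 0, 1, z] - A 0 - A 3 := by rw [← hz]; abel
  have h₂ : A 2 = ![1, y, y, 1, y] - A 0 - A 1 - A 3 - A 4 := by rw [← hy]; abel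
  funext i j
  fin_cases i <;> fin_cases j <;> simp [normalizedMatrix, h₀, h₁, h₂, h₃, h₄]

theorem inD_design_three_two_one : inD ![3, 3, 2, 2, 1] := by
  simp only [inD, cons_val]; norm_num

theorem eq_of_inD_vecMul_normalizedMatrix {x y z : ℝ}
    (h : inD (![3, 3, 2, 2, 1] ᵥ* normalizedMatrix x y z)) : x = y ∧ y = z := by
  obtain ⟨h₁, h₂⟩ := h
  simp only [vecMul_normalizedMatrix, cons_val] at h₁ h₂
  constructor <;> linarith

theorem kernel_is_multiple_general (A : Matrix (Fin 5) (Fin 5) ℝ) (Γ : Fin 5 → ℝ)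
    (M : (Fin 5 → ℝ) → (Fin 5 → ℝ))
    (hM : ∀ q, M q = Matrix.vecMul q A + Γ)
    (hD : ∀ q, inD q → inD (M q))
    (hPi0 : ∀ q : Fin 5 → ℝ, q 1 = 0 → q 2 = 0 → q 4 = 0 → M q = q)
    (x y z : ℝ)
    (hx : M ![0, 1, 0, 0, 0] = ![0, x, 0, 0, 0])
    (hy : M ![1, 1, 1, 1, 1] = ![1, y, y, 1, y])
    (hz : M ![1, 0, 0, 1, 1] = ![1, 0, 0, 1, z]) :
    x = y ∧ y = z ∧
      ∀ q : Fin 5 → ℝ, M q = ![q 0, x * q 1, x * q 2, q 3, x * q 4] := by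
  have hΓ : Γ = 0 := by simpa using (hM 0).symm.trans (hPi0 0 rfl rfl rfl)
  have hMA : ∀ q, M q = q ᵥ* A := fun q => by rw [hM, hΓ, add_zero]
  have hAN : A = normalizedMatrix x y z := by
    refine eq_normalizedMatrix_of_vecMul_eq A x y z ?_ ?_ ?_ ?_ ?_ <;> rw [← hMA]
    exacts [hPi0 _ rfl rfl rfl, hPi0 _ rfl rfl rfl, hx, hz, hy]
  have hDesign := hD _ inD_design_three_two_one
  rw [hMA, hAN] at hDesign
  obtain ⟨rfl, rfl⟩ := eq_of_inD_vecMul_normalizedMatrix hDesign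
  refine ⟨rfl, rfl, fun q => ?_⟩
  rw [hMA, hAN, vecMul_normalizedMatrix]
  simp

theorem kernel_is_multiple (A : Matrix (Fin 5) (Fin 5) ℝ) (Γ : Fin 5 → ℝ)
    (hA : IsUnit A)
    (M : (Fin 5 → ℝ) → (Fin 5 → ℝ))
    (hM : ∀ q, M q = Matrix.vecMul q A + Γ)
    (hD : ∀ q, inD q → inD (M q))
    (hPi0 : ∀ q : Fin 5 → ℝ, q 1 = 0 → q 2 = 0 → q 4 = 0 → M q = q)
    (x y z : ℝ)
    (hx : M ![0, 1, 0, 0, 0] = ![0, x, 0, 0, 0])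
    (hy : M ![1, 1, 1, 1, 1] = ![1, y, y, 1, y])
    (hz : M ![1, 0, 0, 1, 1] = ![1, 0, 0, 1, z]) :
    x = y ∧ y = z ∧
      ∀ q : Fin 5 → ℝ, M q = ![q 0, x * q 1, x * q 2, q 3, x * q 4] :=
  kernel_is_multiple_general A Γ M hM hD hPi0 x y z hx hy hz
end
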